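/- Let c be a real structure on the torus with two real components C₁, C₂. Then C₁ and C₂ are homotopic non-contractible simple closed curves, but they are not c-equivariantly isotopic; moreover there exists an orientation-preserving diffeomorphism commuting with c that carries C₁ to C₂. -/

import Mathlib

/-!
Translation by `i/2` commutes with `c` (because `conj (i/2) ≡ i/2` modulo the lattice) and carries
`C₁` onto `C₂`; sliding the translation vector from `0` to `i/2` is a homotopy between the two
curves. Neither curve is null-homotopic because `Re` retracts the torus onto `C₁ ≅ ℝ/ℤ`, whose
identity map is not null-homotopic.

An equivariant isotopy, however, moves the fixed point `[0]` of `c` through fixed points of `c`.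
Their imaginary parts are `2`-torsion points of `ℝ/ℤ`, a discrete set, so `Im` stays `0` along
the way and `[0]` never reaches `C₂ = {Im ≡ 1/2}`.
-/

noncomputable section
noncomputable section

/-- The Gaussian lattice ℤ + ℤi in ℂ. -/
def GaussianLattice : AddSubgroup ℂ := AddSubgroup.closure {1, Complex.I}

/-- The torus ℂ/(ℤ + ℤi). -/
abbrev Torus : Type := ℂ ⧸ GaussianLattice

/-- Complex conjugation as an additive homomorphism. -/
def conjHom : ℂ →+ ℂ :=
  AddMonoidHom.mk' (fun z => (starRingEnd ℂ) z) (fun a b => by simp)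

lemma conj_maps_lattice : GaussianLattice ≤ GaussianLattice.comap conjHom := by
  rw [GaussianLattice, AddSubgroup.closure_le]
  rintro z hz
  simp only [Set.mem_insert_iff, Set.mem_singleton_iff] at hz
  rcases hz with rfl | rfl
  · refine AddSubgroup.mem_comap.mpr ?_
    have h : conjHom (1 : ℂ) = 1 := by simp [conjHom]
    rw [h]
    exact AddSubgroup.subset_closure (k := ({1, Complex.I} : Set ℂ)) (by simp)
  · refine AddSubgroup.mem_comap.mpr ?_
    have h : conjHom Complex.I = -Complex.I := by simp [conjHom]
    rw [h]
    exact neg_mem (AddSubgroup.subset_closure (k := ({1, Complex.I} : Set ℂ)) (by simp))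

/-- The real structure on the torus induced by complex conjugation `z ↦ z̄`. -/
def torusConj : Torus → Torus :=
  QuotientAddGroup.map GaussianLattice GaussianLattice conjHom conj_maps_lattice


/-- The image in the torus of the line Im(z) = 0. -/
def C₁ : Set Torus := (QuotientAddGroup.mk : ℂ → Torus) '' {z : ℂ | z.im = 0}

/-- The image in the torus of the line Im(z) = 1/2. -/
def C₂ : Set Torus := (QuotientAddGroup.mk : ℂ → Torus) '' {z : ℂ | z.im = 1 / 2}

open Complex Set

theorem Real.eq_of_continuous_of_forall_mem_zmultiples {X : Type*} [TopologicalSpace X]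
    [PreconnectedSpace X] {p : ℝ} {f : X → ℝ} (hf : Continuous f)
    (hmem : ∀ x, f x ∈ AddSubgroup.zmultiples p) (x y : X) : f x = f y :=
  isPreconnected_univ.constant_of_mapsTo
    (isDiscrete_iff_discreteTopology.mpr
      (inferInstanceAs (DiscreteTopology (AddSubgroup.zmultiples p))))
    hf.continuousOn (fun x _ => hmem x) trivial trivial

/- Lift a null-homotopy `F` of the identity through `ℝ → ℝ/pℤ`, starting from the identity of `ℝ`.
The displacement `G (t, x + p) - G (t, x)` lies in `pℤ`, hence is constant; it equals `p` at
`t = 0` but `0` at `t = 1`, where `G (1, ·)` lifts a constant map. -/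
theorem AddCircle.not_nullhomotopic_id {p : ℝ} (hp : p ≠ 0) :
    ¬ (ContinuousMap.id (AddCircle p)).Nullhomotopic := by
  rintro ⟨y, ⟨F⟩⟩
  have cov := AddCircle.isCoveringMap_coe p
  let H : C(unitInterval × ℝ, AddCircle p) :=
    F.toContinuousMap.comp
      ((ContinuousMap.id unitInterval).prodMap ⟨(↑), continuous_quotient_mk'⟩)
  let G := cov.liftHomotopy H (ContinuousMap.id ℝ) fun x => F.apply_zero _
  have hG (q : unitInterval × ℝ) : (G q : AddCircle p) = F (q.1, q.2) :=
    congr_fun (cov.liftHomotopy_lifts ..) q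
  have hG₀ (x : ℝ) : G (0, x) = x := cov.liftHomotopy_zero ..
  have hG₁ (x : ℝ) : (G (1, x) : AddCircle p) = y := by simp [hG]
  have hshift : ∀ q : unitInterval × ℝ, G (q.1, q.2 + p) - G q ∈ AddSubgroup.zmultiples p := by
    intro q
    rw [← QuotientAddGroup.eq_zero_iff, QuotientAddGroup.mk_sub]
    change (G (q.1, q.2 + p) : AddCircle p) - G q = 0
    rw [hG, hG, AddCircle.coe_add_period, sub_self]
  have hend : ∀ x : ℝ, G (1, x) - G (1, 0) ∈ AddSubgroup.zmultiples p := by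
    intro x
    rw [← QuotientAddGroup.eq_zero_iff, QuotientAddGroup.mk_sub]
    change (G (1, x) : AddCircle p) - G (1, 0) = 0
    rw [hG₁, hG₁, sub_self]
  have hshift_const : G (0, 0 + p) - G (0, 0) = G (1, 0 + p) - G (1, 0) :=
    Real.eq_of_continuous_of_forall_mem_zmultiples (by fun_prop) hshift (0, 0) (1, 0)
  have hend_const : G (1, p) - G (1, 0) = G (1, 0) - G (1, 0) :=
    Real.eq_of_continuous_of_forall_mem_zmultiples (by fun_prop) hend p 0
  rw [hG₀, hG₀, zero_add] at hshift_const
  exact hp (by linarith)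

theorem QuotientAddGroup.continuous_map {G H : Type*} [AddGroup G] [AddGroup H]
    [TopologicalSpace G] [TopologicalSpace H] {N : AddSubgroup G} [N.Normal]
    {M : AddSubgroup H} [M.Normal] {f : G →+ H} (hf : Continuous f) (h : N ≤ M.comap f) :
    Continuous (QuotientAddGroup.map N M f h) :=
  isQuotientMap_quotient_mk'.continuous_iff.mpr (continuous_quotient_mk'.comp hf)

theorem ContinuousMap.homotopic_comp_addRight {X G : Type*} [TopologicalSpace X]
    [TopologicalSpace G] [AddGroup G] [ContinuousAdd G] [PathConnectedSpace G]
    (f : C(X, G)) (c : G) : f.Homotopic ((Homeomorph.addRight c : C(G, G)).comp f) :=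
  let γ := PathConnectedSpace.somePath (0 : G) c
  ⟨{ toFun := fun q => f q.2 + γ q.1
     map_zero_left := by simp
     map_one_left := by simp }⟩

theorem ContinuousMap.Homotopic.not_nullhomotopic {X Y : Type*} [TopologicalSpace X]
    [TopologicalSpace Y] {f g : C(X, Y)} (hfg : f.Homotopic g) (hf : ¬ f.Nullhomotopic) :
    ¬ g.Nullhomotopic :=
  fun ⟨y, hg⟩ => hf ⟨y, hfg.trans hg⟩

theorem ContinuousMap.not_nullhomotopic_of_comp_eq_id {X Y : Type*} [TopologicalSpace X]
    [TopologicalSpace Y] {f : C(X, Y)} {g : C(Y, X)} (hgf : g.comp f = .id X)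
    (hX : ¬ (ContinuousMap.id X).Nullhomotopic) : ¬ f.Nullhomotopic :=
  fun hf => hX (hgf ▸ hf.comp_right g)

instance : PathConnectedSpace Torus :=
  QuotientAddGroup.mk_surjective.pathConnectedSpace continuous_quotient_mk'

local notation "S¹" => AddCircle (1 : ℝ)

def torusRe : Torus →+ S¹ :=
  QuotientAddGroup.map _ _ reAddGroupHom <| (AddSubgroup.closure_le _).mpr <| by
    rintro z (rfl | rfl) <;> simp

def torusIm : Torus →+ S¹ :=
  QuotientAddGroup.map _ _ imAddGroupHom <| (AddSubgroup.closure_le _).mpr <| by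
    rintro z (rfl | rfl) <;> simp

def circleToTorus : S¹ →+ Torus :=
  QuotientAddGroup.map _ _ ofRealHom.toAddMonoidHom <| AddSubgroup.zmultiples_le.mpr <|
    AddSubgroup.subset_closure (by simp)

@[simp] theorem torusRe_mk (z : ℂ) : torusRe z = (z.re : S¹) := rfl
@[simp] theorem circleToTorus_coe (x : ℝ) : circleToTorus x = ((x : ℂ) : Torus) := rfl

theorem continuous_torusRe : Continuous torusRe :=
  QuotientAddGroup.continuous_map continuous_re _

theorem continuous_torusIm : Continuous torusIm :=
  QuotientAddGroup.continuous_map continuous_im _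

theorem continuous_circleToTorus : Continuous circleToTorus :=
  QuotientAddGroup.continuous_map continuous_ofReal _

theorem torusRe_circleToTorus (s : S¹) : torusRe (circleToTorus s) = s := by
  induction s using QuotientAddGroup.induction_on with
  | H x => simp

theorem torusIm_torusConj (q : Torus) : torusIm (torusConj q) = -torusIm q := by
  induction q using QuotientAddGroup.induction_on with
  | H z => rfl

theorem range_circleToTorus : range circleToTorus = C₁ := by
  ext q
  constructor
  · rintro ⟨s, rfl⟩
    induction s using QuotientAddGroup.induction_on with
    | H x => exact ⟨x, by simp, rfl⟩
  · rintro ⟨z, hz, rfl⟩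
    exact ⟨z.re, congrArg ((↑) : ℂ → Torus) (Complex.ext rfl (by simpa using hz.symm))⟩

theorem torusConj_add (p q : Torus) : torusConj (p + q) = torusConj p + torusConj q :=
  map_add (QuotientAddGroup.map _ _ conjHom conj_maps_lattice) p q

theorem torusConj_mk_I_div_two : torusConj ((I / 2 : ℂ) : Torus) = ((I / 2 : ℂ) : Torus) := by
  change (((starRingEnd ℂ) (I / 2) : ℂ) : Torus) = _
  have h : -(starRingEnd ℂ) (I / 2) + I / 2 = I := by
    rw [map_div₀, conj_I, map_ofNat]
    ring
  rw [QuotientAddGroup.eq, h]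
  exact AddSubgroup.subset_closure (by simp)

theorem image_add_I_div_two_C₁ : (· + ((I / 2 : ℂ) : Torus)) '' C₁ = C₂ := by
  rw [C₁, C₂, image_image]
  simp only [← QuotientAddGroup.mk_add]
  rw [← image_image (g := QuotientAddGroup.mk) (f := (· + I / 2)), image_add_right]
  congr 1
  ext z
  simp [add_neg_eq_zero]

theorem torusIm_of_mem_C₂ {q : Torus} (hq : q ∈ C₂) : torusIm q = ((1 / 2 : ℝ) : S¹) := by
  obtain ⟨z, hz, rfl⟩ := hq
  exact congrArg _ hz

theorem torusIm_eq_of_equivariant_homotopy (H : C(unitInterval × Torus, Torus))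
    (h₀ : ∀ p, H (0, p) = p) (hconj : ∀ t p, H (t, torusConj p) = torusConj (H (t, p)))
    {q : Torus} (hq : torusConj q = q) : torusIm (H (1, q)) = torusIm q := by
  have htorsion (t : unitInterval) : 2 • torusIm (H (t, q)) = 0 := by
    rw [two_nsmul, ← neg_eq_iff_add_eq_zero, ← torusIm_torusConj, ← hconj, hq]
  have := isPreconnected_univ.constant_of_mapsTo
    (AddCircle.finite_torsion 1 two_pos).isDiscrete
    (continuous_torusIm.comp (H.continuous.comp (Continuous.prodMk_left q))).continuousOn
    (fun t _ => htorsion t) (mem_univ 1) (mem_univ 0)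
  simpa [h₀] using this

theorem twin_real_circles :
    -- C₁ and C₂ are homotopic non-contractible simple closed curves
    (∃ γ₁ γ₂ : C(AddCircle (1 : ℝ), Torus),
        Function.Injective γ₁ ∧ Function.Injective γ₂ ∧
        Set.range γ₁ = C₁ ∧ Set.range γ₂ = C₂ ∧
        ¬ γ₁.Nullhomotopic ∧ ¬ γ₂.Nullhomotopic ∧
        γ₁.Homotopic γ₂) ∧
    -- C₁ and C₂ are not c-equivariantly isotopic
    (¬ ∃ H : C(unitInterval × Torus, Torus),
        (∀ p, H (0, p) = p) ∧
        (∀ t : unitInterval, ∃ e : Torus ≃ₜ Torus, ⇑e = fun p => H (t, p)) ∧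
        (∀ (t : unitInterval) (p : Torus), H (t, torusConj p) = torusConj (H (t, p))) ∧
        (fun p => H (1, p)) '' C₁ = C₂) ∧
    -- an orientation-preserving diffeomorphism commuting with c carries C₁ to C₂
    (∃ φ : Torus ≃ₜ Torus,
        (∀ p, φ (torusConj p) = torusConj (φ p)) ∧
        φ '' C₁ = C₂ ∧
        ∃ (A : ℂ →ₗ[ℝ] ℂ) (b : ℂ), 0 < LinearMap.det A ∧
          ∀ z : ℂ, φ (QuotientAddGroup.mk z) = QuotientAddGroup.mk (A z + b)) := by
  set c : Torus := ((I / 2 : ℂ) : Torus)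
  let γ₁ : C(S¹, Torus) := ⟨circleToTorus, continuous_circleToTorus⟩
  have hγ₁ : Function.LeftInverse torusRe γ₁ := torusRe_circleToTorus
  have hnull : ¬ γ₁.Nullhomotopic :=
    ContinuousMap.not_nullhomotopic_of_comp_eq_id (g := ⟨torusRe, continuous_torusRe⟩)
      (ContinuousMap.ext hγ₁) (AddCircle.not_nullhomotopic_id one_ne_zero)
  have hhom := ContinuousMap.homotopic_comp_addRight γ₁ c
  refine ⟨⟨γ₁, _, hγ₁.injective, (Homeomorph.addRight c).injective.comp hγ₁.injective,
      range_circleToTorus, ?_, hnull, hhom.not_nullhomotopic hnull, hhom⟩, ?_,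
      Homeomorph.addRight c, fun p => ?_, image_add_I_div_two_C₁,
      LinearMap.id, I / 2, by simp, fun z => rfl⟩
  · rw [ContinuousMap.coe_comp, range_comp]
    exact (congrArg _ range_circleToTorus).trans image_add_I_div_two_C₁
  · rintro ⟨H, h₀, -, hconj, h₁⟩
    have hH : H (1, 0) ∈ C₂ := h₁ ▸ mem_image_of_mem _ ⟨0, rfl, rfl⟩
    have h := torusIm_eq_of_equivariant_homotopy H h₀ hconj (map_zero _)
    rw [torusIm_of_mem_C₂ hH, map_zero, AddCircle.coe_eq_zero_iff_of_mem_Ico (by norm_num)] at h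
    norm_num at h
  · change torusConj p + c = torusConj (p + c)
    rw [torusConj_add, torusConj_mk_I_div_two]

end
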